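/- arXiv:math/9701221 — 2 statements merged into one kernel-verified Lean document; each statement's English description precedes it below -/
import Mathlib

section
/- Let τ: ℝ² \ {0} → ℝ², f(z₁) = z₁ with z₁ = x + iy ∈ ℂ, and consider f^{a}(z) = z^{a} for a positive integer a. On the set where |x| ≥ |y| and x ≠ 0, the ideal generated by Re(z^a) and Im(z^a) in continuous functions equals the ideal generated by x^a: i.e., Re(z^a) = x^a·u and Im(z^a) = x^a·v for continuous functions u, v with u² + v² never zero on that set. -/
/-!
Off the line `x = 0` we can pull `x` out of `x + iy`: `(x + iy)^a = x^a (1 + i y/x)^a`. The second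
factor is continuous there, and it never vanishes because `1 + i y/x` has real part `1`; so its
real and imaginary parts are the required `u` and `v`.
-/

open Complex

noncomputable def slopePow (a : ℕ) (p : ℝ × ℝ) : ℂ := (1 + ((p.2 / p.1 : ℝ) : ℂ) * I) ^ a

theorem continuousOn_slopePow (a : ℕ) : ContinuousOn (slopePow a) {p | p.1 ≠ 0} := by
  refine (continuousOn_const.add (ContinuousOn.mul ?_ continuousOn_const)).pow a
  exact continuous_ofReal.comp_continuousOn (continuousOn_snd.div continuousOn_fst fun _ hp => hp)

theorem ofReal_add_mul_I_pow_eq {x : ℝ} (hx : x ≠ 0) (y : ℝ) (a : ℕ) :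
    ((x : ℂ) + y * I) ^ a = ((x ^ a : ℝ) : ℂ) * (1 + ((y / x : ℝ) : ℂ) * I) ^ a := by
  have hx' : (x : ℂ) ≠ 0 := ofReal_ne_zero.mpr hx
  rw [ofReal_pow, ← mul_pow]
  congr 1
  push_cast
  field_simp

theorem one_add_ofReal_mul_I_ne_zero (t : ℝ) : (1 + (t : ℂ) * I) ≠ 0 := fun h => by
  simpa using congrArg re h

theorem re_sq_add_im_sq_ne_zero {z : ℂ} (hz : z ≠ 0) : z.re ^ 2 + z.im ^ 2 ≠ 0 := by
  simpa [normSq_apply, sq] using (normSq_pos.mpr hz).ne'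

theorem pulled_back_ideal_invertible_general (a : ℕ) :
    ∃ u v : ℝ × ℝ → ℝ,
      ContinuousOn u {p : ℝ × ℝ | |p.2| ≤ |p.1| ∧ p.1 ≠ 0} ∧
      ContinuousOn v {p : ℝ × ℝ | |p.2| ≤ |p.1| ∧ p.1 ≠ 0} ∧
      ∀ p : ℝ × ℝ, |p.2| ≤ |p.1| → p.1 ≠ 0 →
        (((p.1 : ℂ) + (p.2 : ℂ) * Complex.I) ^ a).re = p.1 ^ a * u p ∧
        (((p.1 : ℂ) + (p.2 : ℂ) * Complex.I) ^ a).im = p.1 ^ a * v p ∧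
        u p ^ 2 + v p ^ 2 ≠ 0 := by
  have hw : ContinuousOn (slopePow a) {p : ℝ × ℝ | |p.2| ≤ |p.1| ∧ p.1 ≠ 0} :=
    (continuousOn_slopePow a).mono fun _ hp => hp.2
  refine ⟨fun p => (slopePow a p).re, fun p => (slopePow a p).im,
    continuous_re.comp_continuousOn hw, continuous_im.comp_continuousOn hw, fun p _ hx => ?_⟩
  rw [ofReal_add_mul_I_pow_eq hx, re_ofReal_mul, im_ofReal_mul]
  exact ⟨rfl, rfl, re_sq_add_im_sq_ne_zero (pow_ne_zero a (one_add_ofReal_mul_I_ne_zero _))⟩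

/-- On the set `{|x| ≥ |y|, x ≠ 0} ⊆ ℝ²`, the ideal generated by `Re((x+iy)^a)` and
`Im((x+iy)^a)` equals the ideal generated by `x^a`: there are continuous functions
`u, v` with `Re((x+iy)^a) = x^a·u`, `Im((x+iy)^a) = x^a·v` and `u² + v²` nowhere
zero on that set. -/
theorem pulled_back_ideal_invertible (a : ℕ) (ha : 1 ≤ a) :
    ∃ u v : ℝ × ℝ → ℝ,
      ContinuousOn u {p : ℝ × ℝ | |p.2| ≤ |p.1| ∧ p.1 ≠ 0} ∧
      ContinuousOn v {p : ℝ × ℝ | |p.2| ≤ |p.1| ∧ p.1 ≠ 0} ∧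
      ∀ p : ℝ × ℝ, |p.2| ≤ |p.1| → p.1 ≠ 0 →
        (((p.1 : ℂ) + (p.2 : ℂ) * Complex.I) ^ a).re = p.1 ^ a * u p ∧
        (((p.1 : ℂ) + (p.2 : ℂ) * Complex.I) ^ a).im = p.1 ^ a * v p ∧
        u p ^ 2 + v p ^ 2 ≠ 0 :=
  pulled_back_ideal_invertible_general a
end

section
/- Let f(x) = ∏_{i=1}^{k} xᵢ^{aᵢ} with aᵢ ≥ 1, and let R: {x ∈ ℝⁿ : xᵢ ≥ 0, i ≤ k} → {x : xᵢ ≥ 0, ∏_{i≤k} xᵢ = 0} × [0,∞) be R(x) = (x − δ(x)·e, f(x)) where δ(x) = min{x₁,…,x_k} (and the translate x − δ(x)·e is recorded in coordinates as in the paper). Then R is injective: if x, y are in the closed quadrant and x − δ(x)e = y − δ(y)e and f(x) = f(y), then x = y. -/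
/-! If the two points have the same retraction, then on the first `k` coordinates one is a
translate of the other, `x = y + c`. Since every `aᵢ ≥ 1`, the product `∏ᵢ xᵢ ^ aᵢ` strictly
increases under a positive translation of nonnegative coordinates, so equal values of `f`
force `c = 0`. -/

namespace Finset

variable {ι R : Type*} [CommSemiring R] [LinearOrder R] [IsStrictOrderedRing R] {s : Finset ι}

lemma prod_lt_prod_of_nonneg_of_nonempty {f g : ι → R} (hs : s.Nonempty)
    (hf : ∀ i ∈ s, 0 ≤ f i) (hfg : ∀ i ∈ s, f i < g i) :
    ∏ i ∈ s, f i < ∏ i ∈ s, g i := by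
  induction hs using Nonempty.cons_induction with
  | singleton i => simpa using hfg i (mem_singleton_self i)
  | cons i t hi ht ih =>
    simp only [prod_cons, forall_mem_cons] at hf hfg ⊢
    exact mul_lt_mul'' hfg.1 (ih hf.2 hfg.2) hf.1 (prod_nonneg hf.2)

lemma prod_pow_lt_prod_pow {x y : ι → R} {a : ι → ℕ} (hs : s.Nonempty)
    (ha : ∀ i ∈ s, a i ≠ 0) (hx : ∀ i ∈ s, 0 ≤ x i) (hxy : ∀ i ∈ s, x i < y i) :
    ∏ i ∈ s, x i ^ a i < ∏ i ∈ s, y i ^ a i :=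
  prod_lt_prod_of_nonneg_of_nonempty hs (fun i hi => pow_nonneg (hx i hi) _)
    fun i hi => pow_lt_pow_left₀ (hxy i hi) (hx i hi) (ha i hi)

end Finset

lemma Real.eq_zero_of_prod_pow_eq_of_sub_eq {ι : Type*} {s : Finset ι} {x y : ι → ℝ}
    {a : ι → ℕ} {c : ℝ} (hs : s.Nonempty) (ha : ∀ i ∈ s, a i ≠ 0)
    (hx : ∀ i ∈ s, 0 ≤ x i) (hy : ∀ i ∈ s, 0 ≤ y i) (hxy : ∀ i ∈ s, x i - y i = c)
    (hprod : ∏ i ∈ s, x i ^ a i = ∏ i ∈ s, y i ^ a i) : c = 0 := by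
  rcases lt_trichotomy c 0 with hc | hc | hc
  · refine absurd hprod (Finset.prod_pow_lt_prod_pow hs ha hx fun i hi => ?_).ne
    linarith [hxy i hi]
  · exact hc
  · refine absurd hprod (Finset.prod_pow_lt_prod_pow hs ha hy fun i hi => ?_).ne'
    linarith [hxy i hi]

theorem trivialization_injective_general (n k : ℕ) (hk : 1 ≤ k) (hkn : k ≤ n)
    (a : Fin n → ℕ) (ha : ∀ i : Fin n, (i : ℕ) < k → 1 ≤ a i)
    (δ : (Fin n → ℝ) → ℝ)
    (x y : Fin n → ℝ)
    (hx : ∀ i : Fin n, (i : ℕ) < k → 0 ≤ x i)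
    (hy : ∀ i : Fin n, (i : ℕ) < k → 0 ≤ y i)
    (hr : (fun j : Fin n => if (j : ℕ) < k then x j - δ x else x j)
        = (fun j : Fin n => if (j : ℕ) < k then y j - δ y else y j))
    (hf : (∏ i ∈ Finset.univ.filter (fun i : Fin n => (i : ℕ) < k), x i ^ a i)
        = ∏ i ∈ Finset.univ.filter (fun i : Fin n => (i : ℕ) < k), y i ^ a i) :
    x = y := by
  have hshift : ∀ j : Fin n, (j : ℕ) < k → x j - y j = δ x - δ y := fun j hj => by
    have := congrFun hr j
    simp only [hj, if_true] at this
    linarith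
  have hne : (Finset.univ.filter fun i : Fin n => (i : ℕ) < k).Nonempty :=
    ⟨⟨0, by omega⟩, Finset.mem_filter.2 ⟨Finset.mem_univ _, hk⟩⟩
  have hδeq : δ x - δ y = 0 := by
    refine Real.eq_zero_of_prod_pow_eq_of_sub_eq hne ?_ ?_ ?_ ?_ hf
    all_goals simp only [Finset.mem_filter, Finset.mem_univ, true_and]
    exacts [fun i hi => Nat.one_le_iff_ne_zero.1 (ha i hi), hx, hy, hshift]
  funext j
  by_cases hj : (j : ℕ) < k
  · linarith [hshift j hj]
  · simpa [hj] using congrFun hr j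

/-- Injectivity of the local trivialization `R(x) = (x − δ(x)·e, f(x))` on the closed
positive quadrant, where `δ(x) = min{x₁,…,x_k}`, `e = e₁ + ⋯ + e_k`, and
`f(x) = ∏_{i≤k} xᵢ^{aᵢ}` with all `aᵢ ≥ 1`. -/
theorem trivialization_injective (n k : ℕ) (hk : 1 ≤ k) (hkn : k ≤ n)
    (a : Fin n → ℕ) (ha : ∀ i : Fin n, (i : ℕ) < k → 1 ≤ a i)
    (δ : (Fin n → ℝ) → ℝ)
    (hδ : ∀ x, δ x = sInf {y | ∃ i : Fin n, (i : ℕ) < k ∧ y = x i})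
    (x y : Fin n → ℝ)
    (hx : ∀ i : Fin n, (i : ℕ) < k → 0 ≤ x i)
    (hy : ∀ i : Fin n, (i : ℕ) < k → 0 ≤ y i)
    (hr : (fun j : Fin n => if (j : ℕ) < k then x j - δ x else x j)
        = (fun j : Fin n => if (j : ℕ) < k then y j - δ y else y j))
    (hf : (∏ i ∈ Finset.univ.filter (fun i : Fin n => (i : ℕ) < k), x i ^ a i)
        = ∏ i ∈ Finset.univ.filter (fun i : Fin n => (i : ℕ) < k), y i ^ a i) :
    x = y :=
  trivialization_injective_general n k hk hkn a ha δ x y hx hy hr hf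
end
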